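/- Let m ≥ 2 be an integer and α ∈ [0,1]. Let Δ^m be the channel on m×m matrices Δ^m(σ) := Σ_{j=1}^m ⟨j|σ|j⟩ |j⟩⟨j|, and let M be the channel whose Choi operator is (1−α)·J^{Δ^m} + (α/(m−1))·(I_{m²} − J^{Δ^m}), where J^{Δ^m} := Σ_{j=1}^m |j⟩⟨j|⊗|j⟩⟨j|. Then for every finite-dimensional Hilbert space R and every density matrix ρ on R⊗ℂ^m, ‖(id_R⊗M)(ρ) − (id_R⊗Δ^m)(ρ)‖₁ ≤ 2α; moreover equality holds for ρ = |0⟩⟨0|_R ⊗ |0⟩⟨0|. -/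

import Mathlib

/-!
Subtracting the two Choi matrices leaves the real diagonal Choi matrix `c(a, b) = -α` for
`a = b` and `α / (m - 1)` otherwise, so the difference of the outputs is `(id ⊗ C)(ρ)` for the
map `C` with that Choi matrix. Splitting `c` into its positive and negative parts writes this as
`P - N` with `P`, `N` positive semidefinite (Schur product theorem), so its trace norm is at most
`tr P + tr N = (∑_b |c(a, b)|) · tr ρ = α + (m - 1) · α / (m - 1) = 2α`. On
`ρ₀ = |0⟩⟨0| ⊗ |0⟩⟨0|` the output is diagonal with entries `c(0, b)`, so equality holds.
-/

open Matrix
open scoped Classical ComplexOrder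

namespace ICO

/-- Trace norm of a Hermitian matrix: the sum of the absolute values of its eigenvalues
(junk value 0 on non-Hermitian matrices). -/
noncomputable def traceNorm {n : Type} [Fintype n] [DecidableEq n]
    (H : Matrix n n ℂ) : ℝ :=
  if h : H.IsHermitian then ∑ i, |h.eigenvalues i| else 0

/-- A density matrix: positive semidefinite with unit trace. -/
def IsDensity {n : Type} [Fintype n] (ρ : Matrix n n ℂ) : Prop :=
  ρ.PosSemidef ∧ ρ.trace = 1

/-- Action of the channel with Choi operator `J` (on A⊗B) on a state of R⊗A,
acting as the identity on the reference R:  `(id_R ⊗ C)(ρ)`. -/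
noncomputable def applyChoi {A B R : Type} [Fintype A]
    (J : Matrix (A × B) (A × B) ℂ) (ρ : Matrix (R × A) (R × A) ℂ) :
    Matrix (R × B) (R × B) ℂ :=
  Matrix.of fun p q => ∑ a : A, ∑ a' : A, ρ (p.1, a) (q.1, a') * J (a, p.2) (a', q.2)

/-- Choi operator of the noiseless classical channel `Δ^m`. -/
noncomputable def JDelta (m : ℕ) : Matrix (Fin m × Fin m) (Fin m × Fin m) ℂ :=
  Matrix.of fun p q => if p.1 = p.2 ∧ q.1 = q.2 ∧ p.1 = q.1 then 1 else 0

section TraceNorm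

variable {n : Type} [Fintype n] [DecidableEq n]

theorem sum_star_dotProduct_mulVec_eigenvectorBasis {H : Matrix n n ℂ} (hH : H.IsHermitian)
    (A : Matrix n n ℂ) :
    ∑ i, star ⇑(hH.eigenvectorBasis i) ⬝ᵥ A *ᵥ ⇑(hH.eigenvectorBasis i) = A.trace := by
  let U := hH.eigenvectorUnitary
  calc _ = (star (U : Matrix n n ℂ) * A * U).trace := by
          simp only [trace, diag, mul_mul_apply]; rfl
    _ = A.trace := by
      rw [trace_mul_cycle, Unitary.mul_star_self_of_mem U.2, one_mul]

theorem traceNorm_sub_le {P N : Matrix n n ℂ} (hP : P.PosSemidef) (hN : N.PosSemidef) :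
    traceNorm (P - N) ≤ (P.trace + N.trace).re := by
  have hH : (P - N).IsHermitian := hP.1.sub hN.1
  have hnonneg {A : Matrix n n ℂ} (hA : A.PosSemidef) (i : n) :
      0 ≤ (star ⇑(hH.eigenvectorBasis i) ⬝ᵥ A *ᵥ ⇑(hH.eigenvectorBasis i)).re :=
    (RCLike.nonneg_iff.mp (hA.dotProduct_mulVec_nonneg _)).1
  rw [traceNorm, dif_pos hH, ← sum_star_dotProduct_mulVec_eigenvectorBasis hH P,
    ← sum_star_dotProduct_mulVec_eigenvectorBasis hH N, ← Finset.sum_add_distrib, Complex.re_sum]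
  refine Finset.sum_le_sum fun i _ => ?_
  rw [hH.eigenvalues_eq i, sub_mulVec, dotProduct_sub, Complex.add_re]
  exact (abs_sub _ _).trans_eq
    (by rw [abs_of_nonneg (hnonneg hP i), abs_of_nonneg (hnonneg hN i)])

theorem traceNorm_diagonal_ofReal (f : n → ℝ) :
    traceNorm (diagonal fun i => (f i : ℂ)) = ∑ i, |f i| := by
  have hH : (diagonal fun i => (f i : ℂ)).IsHermitian :=
    isHermitian_diagonal_of_self_adjoint _ (by ext i; simp)
  have hspec : Multiset.map (RCLike.ofReal ∘ hH.eigenvalues) Finset.univ.val =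
      Multiset.map (fun i => (f i : ℂ)) Finset.univ.val := by
    rw [← hH.roots_charpoly_eq_eigenvalues, charpoly_diagonal, Polynomial.roots_prod]
    · simp
    · simp [Finset.prod_ne_zero_iff, Polynomial.X_sub_C_ne_zero]
  rw [traceNorm, dif_pos hH]
  simpa [Multiset.map_map, Function.comp_def] using
    congrArg (fun s : Multiset ℂ => (s.map fun z => |z.re|).sum) hspec

end TraceNorm

section Choi

variable {A B R : Type} [Fintype A]

theorem applyChoi_sub (J K : Matrix (A × B) (A × B) ℂ) (ρ : Matrix (R × A) (R × A) ℂ) :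
    applyChoi (J - K) ρ = applyChoi J ρ - applyChoi K ρ := by
  ext p q
  simp [applyChoi, mul_sub, Finset.sum_sub_distrib]

theorem posSemidef_applyChoi [Fintype R] [Fintype B] {J : Matrix (A × B) (A × B) ℂ}
    {ρ : Matrix (R × A) (R × A) ℂ} (hJ : J.PosSemidef) (hρ : ρ.PosSemidef) :
    (applyChoi J ρ).PosSemidef := by
  let M : Matrix ((R × B) × A) ((R × B) × A) ℂ :=
    ρ.submatrix (fun i => (i.1.1, i.2)) (fun i => (i.1.1, i.2)) ⊙
      J.submatrix (fun i => (i.2, i.1.2)) (fun i => (i.2, i.1.2))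
  let K : Matrix ((R × B) × A) (R × B) ℂ := of fun i p => if i.1 = p then 1 else 0
  have hM : M.PosSemidef := (hρ.submatrix _).hadamard (hJ.submatrix _)
  -- `K` sums over the input index `a`, so compressing the entrywise product gives `(id ⊗ C)(ρ)`.
  have hcompress : applyChoi J ρ = Kᴴ * M * K := by
    ext p q
    simpa [M, K, applyChoi, mul_apply, Fintype.sum_prod_type] using Finset.sum_comm
  rw [hcompress]
  exact hM.conjTranspose_mul_mul_same K

variable [DecidableEq A] [DecidableEq B]

theorem applyChoi_diagonal (c : A × B → ℂ) (ρ : Matrix (R × A) (R × A) ℂ) :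
    applyChoi (diagonal c) ρ =
      of fun p q => if p.2 = q.2 then ∑ a, ρ (p.1, a) (q.1, a) * c (a, p.2) else 0 := by
  ext p q
  by_cases h : p.2 = q.2 <;> simp [applyChoi, diagonal_apply, h]

theorem trace_applyChoi_diagonal [Fintype R] [Fintype B] (c : A × B → ℂ)
    (ρ : Matrix (R × A) (R × A) ℂ) :
    (applyChoi (diagonal c) ρ).trace = ∑ x : R × A, ρ x x * ∑ b, c (x.2, b) := by
  simp only [applyChoi_diagonal, trace, diag, of_apply, if_true, Fintype.sum_prod_type,
    Finset.mul_sum]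
  exact Finset.sum_congr rfl fun _ _ => Finset.sum_comm

theorem applyChoi_diagonal_single [DecidableEq R] (c : A × B → ℂ) (r₀ : R) (a₀ : A) :
    applyChoi (diagonal c) (single (r₀, a₀) (r₀, a₀) 1) =
      diagonal fun p => if p.1 = r₀ then c (a₀, p.2) else 0 := by
  ext ⟨r, b⟩ ⟨r', b'⟩
  simp only [applyChoi_diagonal, of_apply, diagonal_apply, single_apply, Prod.mk.injEq]
  by_cases hb : b = b' <;> by_cases hr : r = r₀ <;> by_cases hr' : r' = r₀ <;>
    simp [hb, hr, hr', eq_comm (a := r₀)]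

theorem traceNorm_applyChoi_diagonal_le [Fintype R] [DecidableEq R] [Fintype B]
    (c : A × B → ℝ) {k : ℝ} (hc : ∀ a, ∑ b, |c (a, b)| = k)
    {ρ : Matrix (R × A) (R × A) ℂ} (hρ : IsDensity ρ) :
    traceNorm (applyChoi (diagonal fun p => (c p : ℂ)) ρ) ≤ k := by
  have hpsd (f : A × B → ℝ) (hf : 0 ≤ f) :
      (applyChoi (diagonal fun p => (f p : ℂ)) ρ).PosSemidef :=
    posSemidef_applyChoi (posSemidef_diagonal_iff.mpr fun p => by exact_mod_cast hf p) hρ.1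
  have hsplit : (diagonal fun p => (c p : ℂ)) =
      diagonal (fun p => (((c p)⁺ : ℝ) : ℂ)) - diagonal (fun p => (((c p)⁻ : ℝ) : ℂ)) := by
    rw [diagonal_sub]
    congr 1
    funext p
    rw [← Complex.ofReal_sub, posPart_sub_negPart]
  rw [hsplit, applyChoi_sub]
  refine (traceNorm_sub_le (hpsd _ fun p => posPart_nonneg _)
    (hpsd _ fun p => negPart_nonneg _)).trans_eq ?_
  rw [trace_applyChoi_diagonal, trace_applyChoi_diagonal, ← Finset.sum_add_distrib]
  simp_rw [← mul_add, ← Finset.sum_add_distrib, ← Complex.ofReal_add, posPart_add_negPart,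
    ← Complex.ofReal_sum, hc, ← Finset.sum_mul]
  change (ρ.trace * k).re = k
  simp [hρ.2]

theorem traceNorm_applyChoi_diagonal_single [Fintype R] [DecidableEq R] [Fintype B]
    (c : A × B → ℝ) (r₀ : R) (a₀ : A) :
    traceNorm (applyChoi (diagonal fun p => (c p : ℂ)) (single (r₀, a₀) (r₀, a₀) 1)) =
      ∑ b, |c (a₀, b)| := by
  rw [applyChoi_diagonal_single]
  have hreal : (fun p : R × B => if p.1 = r₀ then (c (a₀, p.2) : ℂ) else 0) =
      fun p => ((if p.1 = r₀ then c (a₀, p.2) else 0 : ℝ) : ℂ) := by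
    ext p; split_ifs <;> simp
  rw [hreal, traceNorm_diagonal_ofReal, Fintype.sum_prod_type]
  simp [apply_ite]

end Choi

theorem sum_ite_eq_add_mul {ι : Type} [Fintype ι] [DecidableEq ι] (a : ι) (x y : ℝ) :
    ∑ b, (if a = b then x else y) = x + ((Fintype.card ι : ℝ) - 1) * y := by
  have hsplit (b : ι) : (if a = b then x else y) = y + if a = b then x - y else 0 := by
    split_ifs <;> ring
  simp only [hsplit, Finset.sum_add_distrib, Finset.sum_const, Finset.sum_ite_eq,
    Finset.mem_univ, if_true, Finset.card_univ, nsmul_eq_mul]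
  ring

theorem JDelta_eq_diagonal (m : ℕ) :
    JDelta m = diagonal fun p => if p.1 = p.2 then 1 else 0 := by
  ext ⟨a, b⟩ ⟨a', b'⟩
  simp only [JDelta, diagonal_apply, of_apply, Prod.mk.injEq]
  by_cases h : a = a' ∧ b = b'
  · obtain ⟨rfl, rfl⟩ := h
    simp
  · rw [if_neg h, if_neg]
    rintro ⟨rfl, rfl, rfl⟩
    exact h ⟨rfl, rfl⟩

theorem noisyChoi_sub_JDelta (m : ℕ) (α β : ℝ) :
    (1 - α) • JDelta m + β • ((1 : Matrix (Fin m × Fin m) (Fin m × Fin m) ℂ) - JDelta m)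
      - JDelta m = diagonal fun p => ((if p.1 = p.2 then -α else β : ℝ) : ℂ) := by
  rw [JDelta_eq_diagonal, ← diagonal_one, diagonal_sub, ← diagonal_smul, ← diagonal_smul,
    diagonal_add, diagonal_sub]
  congr 1
  funext p
  by_cases h : p.1 = p.2 <;> simp [h]

theorem traceNorm_noisy_delta_le (m : ℕ) (hm : 2 ≤ m) (α : ℝ) (hα₀ : 0 ≤ α)
    (R : Type) [Fintype R] [DecidableEq R] [Inhabited R] :
    (∀ ρ : Matrix (R × Fin m) (R × Fin m) ℂ, IsDensity ρ →
      traceNorm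
        (applyChoi ((1 - α) • JDelta m + (α / ((m : ℝ) - 1)) •
            ((1 : Matrix (Fin m × Fin m) (Fin m × Fin m) ℂ) - JDelta m)) ρ
          - applyChoi (JDelta m) ρ) ≤ 2 * α) ∧
    (∀ ρ₀ : Matrix (R × Fin m) (R × Fin m) ℂ,
      ρ₀ = Matrix.single ((default : R), (⟨0, by omega⟩ : Fin m))
            ((default : R), (⟨0, by omega⟩ : Fin m)) (1 : ℂ) →
      traceNorm
        (applyChoi ((1 - α) • JDelta m + (α / ((m : ℝ) - 1)) •
            ((1 : Matrix (Fin m × Fin m) (Fin m × Fin m) ℂ) - JDelta m)) ρ₀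
          - applyChoi (JDelta m) ρ₀) = 2 * α) := by
  let c : Fin m × Fin m → ℝ := fun p => if p.1 = p.2 then -α else α / ((m : ℝ) - 1)
  have hdiff (ρ : Matrix (R × Fin m) (R × Fin m) ℂ) :
      applyChoi ((1 - α) • JDelta m + (α / ((m : ℝ) - 1)) • (1 - JDelta m)) ρ
        - applyChoi (JDelta m) ρ =
        applyChoi (diagonal fun p => (c p : ℂ)) ρ := by
    rw [← applyChoi_sub, noisyChoi_sub_JDelta]
  have hm₁ : (0 : ℝ) < m - 1 := by
    have : (2 : ℝ) ≤ m := by exact_mod_cast hm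
    linarith
  have hrow (a : Fin m) : ∑ b, |c (a, b)| = 2 * α := by
    simp only [c, apply_ite abs, abs_neg, abs_of_nonneg hα₀,
      abs_of_nonneg (div_nonneg hα₀ hm₁.le)]
    rw [sum_ite_eq_add_mul, Fintype.card_fin, mul_div_cancel₀ _ hm₁.ne']
    ring
  refine ⟨fun ρ hρ => ?_, fun ρ₀ hρ₀ => ?_⟩
  · rw [hdiff]
    exact traceNorm_applyChoi_diagonal_le c hrow hρ
  · rw [hρ₀, hdiff, traceNorm_applyChoi_diagonal_single, hrow]

end ICO
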